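/- Monotonicity of sharp maximal functions in dimension: for 0 < α ≤ β ≤ d there is a constant C = C(α,β,d) such that M^{#}_β f(x) ≤ C M^{#}_α f(x) for all x ∈ ℝ^d and all functions f. -/

import Mathlib

open MeasureTheory Set
open scoped ENNReal NNReal

noncomputable section

/-- `ℝ^d` with the Euclidean metric. -/
abbrev Rd (d : ℕ) := EuclideanSpace ℝ (Fin d)

/-- Coerce a plain function to a point of `ℝ^d`. -/
def toRd (d : ℕ) (a : Fin d → ℝ) : Rd d := WithLp.toLp 2 a

/-- The normalization constant `ω_β = π^{β/2}/Γ(β/2+1)`. -/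
def omegaConst (β : ℝ) : ℝ := Real.pi ^ (β / 2) / Real.Gamma (β / 2 + 1)

/-- The Hausdorff content `H^β_∞` in `ℝ^d`, via countable covers by balls. -/
def hContent (d : ℕ) (β : ℝ) (E : Set (Rd d)) : ℝ≥0∞ :=
  ⨅ (c : ℕ → Rd d × ℝ) (_ : E ⊆ ⋃ i, Metric.ball (c i).1 (c i).2),
    ∑' i, ENNReal.ofReal (omegaConst β * (c i).2 ^ β)

/-- The Choquet integral of a real-valued (nonnegative) function `g` over `Ω`
with respect to a set function `H`. -/
def choquet (d : ℕ) (H : Set (Rd d) → ℝ≥0∞) (Ω : Set (Rd d)) (g : Rd d → ℝ) : ℝ≥0∞ :=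
  ∫⁻ t in Set.Ioi (0 : ℝ), H {x | x ∈ Ω ∧ t < g x}

/-- The Choquet integral of an `ℝ≥0∞`-valued function `g` over `Ω`
with respect to a set function `H`. -/
def choquetE (d : ℕ) (H : Set (Rd d) → ℝ≥0∞) (Ω : Set (Rd d)) (g : Rd d → ℝ≥0∞) : ℝ≥0∞ :=
  ∫⁻ t in Set.Ioi (0 : ℝ), H {x | x ∈ Ω ∧ ENNReal.ofReal t < g x}

/-- Closed axis-parallel cube with corner `a` and side length `l`. -/
def cubeSet (d : ℕ) (a : Fin d → ℝ) (l : ℝ) : Set (Rd d) :=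
  {y | ∀ i, a i ≤ y i ∧ y i ≤ a i + l}

/-- Open axis-parallel cube with corner `a` and side length `l`. -/
def cubeO (d : ℕ) (a : Fin d → ℝ) (l : ℝ) : Set (Rd d) :=
  {y | ∀ i, a i < y i ∧ y i < a i + l}

/-- Side length of a dyadic cube of generation `k` in the lattice with unit size `l₀`. -/
def dSide (l₀ : ℝ) (k : ℤ) : ℝ := l₀ * 2 ^ k

/-- The dyadic cube, indexed by generation `k : ℤ` and position `m : Fin d → ℤ`,
of the dyadic lattice `D(Q₀)` generated by the cube `Q₀` with corner `a₀` and
side length `l₀`. -/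
def dSet (d : ℕ) (a₀ : Fin d → ℝ) (l₀ : ℝ) (Q : ℤ × (Fin d → ℤ)) : Set (Rd d) :=
  {y | ∀ i, a₀ i + dSide l₀ Q.1 * (Q.2 i : ℝ) ≤ y i ∧
        y i < a₀ i + dSide l₀ Q.1 * ((Q.2 i : ℝ) + 1)}

/-- The dyadic Hausdorff content `H^{β,Q₀}_∞`, via countable covers by dyadic cubes. -/
def dContent (d : ℕ) (β : ℝ) (a₀ : Fin d → ℝ) (l₀ : ℝ) (E : Set (Rd d)) : ℝ≥0∞ :=
  ⨅ (c : ℕ → ℤ × (Fin d → ℤ)) (_ : E ⊆ ⋃ i, dSet d a₀ l₀ (c i)),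
    ∑' i, ENNReal.ofReal (dSide l₀ (c i).1 ^ β)

/-- The dyadic maximal function associated with `H^{β,Q₀}_∞`. -/
def dMax (d : ℕ) (β : ℝ) (a₀ : Fin d → ℝ) (l₀ : ℝ) (f : Rd d → ℝ) (x : Rd d) : ℝ≥0∞ :=
  ⨆ (Q : ℤ × (Fin d → ℤ)) (_ : x ∈ dSet d a₀ l₀ Q),
    choquet d (dContent d β a₀ l₀) (dSet d a₀ l₀ Q) (fun y => |f y|)
      / ENNReal.ofReal (dSide l₀ Q.1 ^ β)

/-- The dyadic `β`-dimensional sharp maximal function `M^{#}_{β,Q₀}`. -/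
def dSharp (d : ℕ) (β : ℝ) (a₀ : Fin d → ℝ) (l₀ : ℝ) (f : Rd d → ℝ) (x : Rd d) : ℝ≥0∞ :=
  ⨆ (Q : ℤ × (Fin d → ℤ)) (_ : x ∈ dSet d a₀ l₀ Q),
    ⨅ (c : ℝ),
      choquet d (dContent d β a₀ l₀) (dSet d a₀ l₀ Q) (fun y => |f y - c|)
        / ENNReal.ofReal (dSide l₀ Q.1 ^ β)

/-- The `β`-dimensional sharp maximal function `M^{#}_β`, over all axis-parallel cubes. -/
def sharpMax (d : ℕ) (β : ℝ) (f : Rd d → ℝ) (x : Rd d) : ℝ≥0∞ :=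
  ⨆ (a : Fin d → ℝ) (l : ℝ) (_ : 0 < l) (_ : x ∈ cubeSet d a l),
    ⨅ (c : ℝ),
      choquet d (hContent d β) (cubeSet d a l) (fun y => |f y - c|) / ENNReal.ofReal (l ^ β)

/-- The `β`-dimensional maximal operator `M_{H^β_∞}` over balls. -/
def ballMax (d : ℕ) (β : ℝ) (f : Rd d → ℝ) (x : Rd d) : ℝ≥0∞ :=
  ⨆ (r : ℝ) (_ : 0 < r),
    choquet d (hContent d β) (Metric.ball x r) (fun y => |f y|)
      / hContent d β (Metric.ball x r)

/-- The Riesz normalization constant `γ(α)`. -/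
def rieszConst (d : ℕ) (α : ℝ) : ℝ :=
  Real.pi ^ ((d : ℝ) / 2) * 2 ^ α * Real.Gamma (α / 2) / Real.Gamma (((d : ℝ) - α) / 2)

/-- The Riesz potential `I_α μ` of a measure. -/
def rieszM (d : ℕ) (α : ℝ) (μ : Measure (Rd d)) (x : Rd d) : ℝ≥0∞ :=
  (ENNReal.ofReal (rieszConst d α))⁻¹ * ∫⁻ y, ENNReal.ofReal (dist x y ^ (α - (d : ℝ))) ∂μ

/-- The (real-valued) Riesz potential `I_α f` of a function. -/
def rieszR (d : ℕ) (α : ℝ) (f : Rd d → ℝ) (x : Rd d) : ℝ :=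
  (rieszConst d α)⁻¹ * ∫ y, f y * dist x y ^ (α - (d : ℝ))

/-- The fractional maximal function `M_α μ` of a measure. -/
def fracMaxM (d : ℕ) (α : ℝ) (μ : Measure (Rd d)) (x : Rd d) : ℝ≥0∞ :=
  ⨆ (a : Fin d → ℝ) (l : ℝ) (_ : 0 < l) (_ : x ∈ cubeSet d a l),
    μ (cubeSet d a l) * ENNReal.ofReal (l ^ (α - (d : ℝ)))

/-- The fractional maximal function `M_α f` of a function. -/
def fracMaxF (d : ℕ) (α : ℝ) (f : Rd d → ℝ) (x : Rd d) : ℝ≥0∞ :=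
  ⨆ (a : Fin d → ℝ) (l : ℝ) (_ : 0 < l) (_ : x ∈ cubeSet d a l),
    (∫⁻ y in cubeSet d a l, ENNReal.ofReal |f y|) * ENNReal.ofReal (l ^ (α - (d : ℝ)))

/-- The weak `L^{p,∞}(H^β_∞)` quasinorm. -/
def weakNorm (d : ℕ) (β : ℝ) (p : ℝ) (g : Rd d → ℝ≥0∞) : ℝ≥0∞ :=
  ⨆ (t : ℝ) (_ : 0 < t),
    ENNReal.ofReal t * hContent d β {x | ENNReal.ofReal t < g x} ^ (1 / p)

/-- The local Morrey norm `‖μ‖_{M^β(Ω)}`. -/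
def morreyNorm (d : ℕ) (β : ℝ) (μ : Measure (Rd d)) (Ω : Set (Rd d)) : ℝ≥0∞ :=
  ⨆ (x : Rd d) (_ : x ∈ Ω) (r : ℝ) (_ : 0 < r),
    μ (Metric.ball x r ∩ Ω) / ENNReal.ofReal (r ^ β)

/-- Generation-`k` cell at position `m` of a dyadic grid with generation offsets `o`. -/
def gcell (d : ℕ) (o : ℤ → Fin d → ℝ) (k : ℤ) (m : Fin d → ℤ) : Set (Rd d) :=
  {y | ∀ i, o k i + 2 ^ k * (m i : ℝ) ≤ y i ∧ y i < o k i + 2 ^ k * ((m i : ℝ) + 1)}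

/-- A dyadic grid in `ℝ^d`: each generation `k` consists of half-open cubes of side `2^k`
partitioning `ℝ^d`, and consecutive generations are nested. -/
structure DyadicGrid (d : ℕ) where
  o : ℤ → Fin d → ℝ
  nested : ∀ k m, ∃ m', gcell d o k m ⊆ gcell d o (k + 1) m'

/-- The dyadic Riesz potential `I^D_α μ` with respect to a dyadic grid. -/
def dyadicRiesz (d : ℕ) (G : DyadicGrid d) (α : ℝ) (μ : Measure (Rd d)) (x : Rd d) : ℝ≥0∞ :=
  ∑' p : ℤ × (Fin d → ℤ),
    Set.indicator (gcell d G.o p.1 p.2)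
      (fun _ => μ (gcell d G.o p.1 p.2) * ENNReal.ofReal (((2 : ℝ) ^ p.1) ^ (α - (d : ℝ)))) x

/-- The exponential on `ℝ≥0∞`. -/
def expE (t : ℝ≥0∞) : ℝ≥0∞ := if t = ∞ then ∞ else ENNReal.ofReal (Real.exp t.toReal)

/-
Inside a ball of radius `R`, every covering ball may be shrunk to radius at most `R` (replacing
it by the ambient ball when it is larger), and for radii `r ≤ R` one has
`r ^ β ≤ R ^ (β - α) * r ^ α`. Hence `H^β_∞ ≤ (ω_β / ω_α) R^{β-α} H^α_∞` on subsets of the ball,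
and the same bound passes to Choquet integrals, which are integrals of the content of level
sets. A cube of side `l` lies in a ball of radius comparable to `l`, so the factor `R^{β-α}` is
exactly compensated by the normalizations `l^β` and `l^α`.
-/

open Metric

lemma omegaConst_pos {β : ℝ} (hβ : 0 ≤ β) : 0 < omegaConst β :=
  div_pos (Real.rpow_pos_of_pos Real.pi_pos _) (Real.Gamma_pos_of_pos (by linarith))

lemma Real.rpow_le_rpow_sub_mul_rpow {r R s α β : ℝ} (hr : 0 < r) (hrR : r ≤ R) (hrs : r ≤ s)
    (hα : 0 ≤ α) (hαβ : α ≤ β) : r ^ β ≤ R ^ (β - α) * s ^ α :=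
  calc r ^ β = r ^ (β - α) * r ^ α := by rw [← Real.rpow_add hr, sub_add_cancel]
    _ ≤ R ^ (β - α) * s ^ α :=
      mul_le_mul (Real.rpow_le_rpow hr.le hrR (by linarith)) (Real.rpow_le_rpow hr.le hrs hα)
        (by positivity) (Real.rpow_nonneg (hr.le.trans hrR) _)

lemma exists_ball_superset_inter_ball {d : ℕ} {α β R : ℝ} (hα : 0 < α) (hαβ : α ≤ β)
    (hR : 0 < R) (x₀ c : Rd d) (r : ℝ) :
    ∃ p : Rd d × ℝ, ball c r ∩ ball x₀ R ⊆ ball p.1 p.2 ∧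
      ENNReal.ofReal (omegaConst β * p.2 ^ β) ≤
        ENNReal.ofReal (omegaConst β / omegaConst α * R ^ (β - α)) *
          ENNReal.ofReal (omegaConst α * r ^ α) := by
  have hβ : 0 < β := hα.trans_le hαβ
  rcases le_or_gt r 0 with hr | hr
  -- radius `0` rather than `r`, since `r ^ β` is a junk value for `r < 0`
  · refine ⟨(c, 0), by simp [ball_eq_empty.mpr hr], ?_⟩
    simp [Real.zero_rpow hβ.ne']
  refine ⟨if r ≤ R then (c, r) else (x₀, R), ?_, ?_⟩
  · split_ifs
    exacts [inter_subset_left, inter_subset_right]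
  have hωα := omegaConst_pos hα.le
  rw [← ENNReal.ofReal_mul' (mul_pos hωα (Real.rpow_pos_of_pos hr _)).le]
  refine ENNReal.ofReal_le_ofReal ?_
  have key : ∀ ρ, 0 < ρ → ρ ≤ R → ρ ≤ r →
      omegaConst β * ρ ^ β ≤
        omegaConst β / omegaConst α * R ^ (β - α) * (omegaConst α * r ^ α) := by
    intro ρ hρ hρR hρr
    calc omegaConst β * ρ ^ β ≤ omegaConst β * (R ^ (β - α) * r ^ α) := by
          gcongr
          · exact (omegaConst_pos hβ.le).le
          · exact Real.rpow_le_rpow_sub_mul_rpow hρ hρR hρr hα.le hαβ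
      _ = _ := by field_simp
  split_ifs with hrR
  exacts [key r hr hrR le_rfl, key R hR le_rfl (not_le.mp hrR).le]

lemma hContent_le_mul {d : ℕ} {α β R : ℝ} (hα : 0 < α) (hαβ : α ≤ β) (hR : 0 < R)
    {x₀ : Rd d} {E : Set (Rd d)} (hE : E ⊆ ball x₀ R) :
    hContent d β E ≤
      ENNReal.ofReal (omegaConst β / omegaConst α * R ^ (β - α)) * hContent d α E := by
  set K := omegaConst β / omegaConst α * R ^ (β - α)
  have hK : ENNReal.ofReal K ≠ 0 := (ENNReal.ofReal_pos.mpr (mul_pos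
    (div_pos (omegaConst_pos (hα.trans_le hαβ).le) (omegaConst_pos hα.le))
    (Real.rpow_pos_of_pos hR _))).ne'
  calc hContent d β E
      ≤ ⨅ (c : ℕ → Rd d × ℝ) (_ : E ⊆ ⋃ i, ball (c i).1 (c i).2),
          ENNReal.ofReal K * ∑' i, ENNReal.ofReal (omegaConst α * (c i).2 ^ α) := by
        refine le_iInf₂ fun c hc => ?_
        choose p hp using fun i => exists_ball_superset_inter_ball hα hαβ hR x₀ (c i).1 (c i).2
        have hcover : E ⊆ ⋃ i, ball (p i).1 (p i).2 := fun y hy => by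
          obtain ⟨i, hi⟩ := mem_iUnion.mp (hc hy)
          exact mem_iUnion.mpr ⟨i, (hp i).1 ⟨hi, hE hy⟩⟩
        calc hContent d β E ≤ ∑' i, ENNReal.ofReal (omegaConst β * (p i).2 ^ β) :=
              iInf₂_le p hcover
          _ ≤ ∑' i, ENNReal.ofReal K * ENNReal.ofReal (omegaConst α * (c i).2 ^ α) :=
              ENNReal.tsum_le_tsum fun i => (hp i).2
          _ = _ := ENNReal.tsum_mul_left
    _ = ENNReal.ofReal K * hContent d α E := by
        simp only [hContent, ENNReal.mul_iInf_of_ne hK ENNReal.ofReal_ne_top]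

lemma choquet_le_mul {d : ℕ} {H₁ H₂ : Set (Rd d) → ℝ≥0∞} {K : ℝ≥0∞} (hK : K ≠ ∞)
    {Ω : Set (Rd d)} (h : ∀ E ⊆ Ω, H₁ E ≤ K * H₂ E) (g : Rd d → ℝ) :
    choquet d H₁ Ω g ≤ K * choquet d H₂ Ω g := by
  rw [choquet, choquet, ← lintegral_const_mul' _ _ hK]
  exact lintegral_mono fun t => h _ fun y hy => hy.1

lemma cubeSet_subset_closedBall {d : ℕ} {a : Fin d → ℝ} {l : ℝ} (hl : 0 ≤ l) :
    cubeSet d a l ⊆ closedBall (toRd d a) (√d * l) := by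
  intro y hy
  have hcoord : ∀ i, dist (y i) (a i) ^ 2 ≤ l ^ 2 := fun i => by
    have := hy i
    rw [Real.dist_eq, sq_abs]
    exact sq_le_sq' (by linarith) (by linarith)
  rw [mem_closedBall, EuclideanSpace.dist_eq, ← Real.sqrt_sq hl, ← Real.sqrt_mul (by positivity)]
  refine Real.sqrt_le_sqrt ?_
  calc ∑ i, dist (y i) (toRd d a i) ^ 2 ≤ ∑ _i : Fin d, l ^ 2 :=
        Finset.sum_le_sum fun i _ => hcoord i
    _ = d * l ^ 2 := by simp

lemma choquet_cubeSet_div_le {d : ℕ} {α β : ℝ} (hα : 0 < α) (hαβ : α ≤ β) {a : Fin d → ℝ}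
    {l : ℝ} (hl : 0 < l) (g : Rd d → ℝ) :
    choquet d (hContent d β) (cubeSet d a l) g / ENNReal.ofReal (l ^ β) ≤
      ENNReal.ofReal (omegaConst β / omegaConst α * (√d + 1) ^ (β - α)) *
        (choquet d (hContent d α) (cubeSet d a l) g / ENNReal.ofReal (l ^ α)) := by
  have hR : 0 < (√d + 1) * l := by positivity
  have hcube : cubeSet d a l ⊆ ball (toRd d a) ((√d + 1) * l) :=
    (cubeSet_subset_closedBall hl.le).trans (closedBall_subset_ball (by linarith))
  have hchoquet := choquet_le_mul ENNReal.ofReal_ne_top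
    (fun E hE => hContent_le_mul hα hαβ hR (hE.trans hcube)) g
  have hlα : ENNReal.ofReal (l ^ α) ≠ 0 := by positivity
  refine ENNReal.div_le_of_le_mul (hchoquet.trans_eq ?_)
  have hlβ : ENNReal.ofReal (l ^ β) = ENNReal.ofReal (l ^ (β - α)) * ENNReal.ofReal (l ^ α) := by
    rw [← ENNReal.ofReal_mul (by positivity), ← Real.rpow_add hl, sub_add_cancel]
  set X := choquet d (hContent d α) (cubeSet d a l) g
  rw [Real.mul_rpow (by positivity) hl.le, ← mul_assoc, ENNReal.ofReal_mul' (by positivity), hlβ,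
    show ∀ C A L : ℝ≥0∞, C * (X / A) * (L * A) = C * L * (X / A * A) by intros; ring,
    ENNReal.div_mul_cancel hlα ENNReal.ofReal_ne_top]

theorem sharpMax_mono_dim_general (d : ℕ) (α β : ℝ) (hα : 0 < α) (hαβ : α ≤ β) :
    ∃ C : ℝ, 0 < C ∧
      ∀ (f : Rd d → ℝ) (x : Rd d),
        sharpMax d β f x ≤ ENNReal.ofReal C * sharpMax d α f x := by
  set C := omegaConst β / omegaConst α * (√d + 1) ^ (β - α)
  have hC : 0 < C := by
    have := omegaConst_pos (hα.trans_le hαβ).le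
    have := omegaConst_pos hα.le
    positivity
  refine ⟨C, hC, fun f x => iSup₂_le fun a l => iSup₂_le fun hl hx => ?_⟩
  calc ⨅ c : ℝ, choquet d (hContent d β) (cubeSet d a l) (fun y => |f y - c|)
        / ENNReal.ofReal (l ^ β)
      ≤ ⨅ c : ℝ, ENNReal.ofReal C * (choquet d (hContent d α) (cubeSet d a l)
          (fun y => |f y - c|) / ENNReal.ofReal (l ^ α)) :=
        iInf_mono fun c => choquet_cubeSet_div_le hα hαβ hl _
    _ = ENNReal.ofReal C * ⨅ c : ℝ, choquet d (hContent d α) (cubeSet d a l)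
          (fun y => |f y - c|) / ENNReal.ofReal (l ^ α) :=
        (ENNReal.mul_iInf_of_ne (by positivity) ENNReal.ofReal_ne_top).symm
    _ ≤ ENNReal.ofReal C * sharpMax d α f x := by
        gcongr
        exact le_iSup₂_of_le a l (le_iSup₂_of_le (α := ℝ≥0∞) hl hx le_rfl)

/-- Monotonicity in dimension of the sharp maximal functions. -/
theorem sharpMax_mono_dim (d : ℕ) (α β : ℝ) (hα : 0 < α) (hαβ : α ≤ β) (hβd : β ≤ d) :
    ∃ C : ℝ, 0 < C ∧
      ∀ (f : Rd d → ℝ) (x : Rd d),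
        sharpMax d β f x ≤ ENNReal.ofReal C * sharpMax d α f x :=
  sharpMax_mono_dim_general d α β hα hαβ
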